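/- Let m ≥ 1, 0 ≤ α < 1, 0 < λ_1 ≤ … ≤ λ_m, L_F > 0, δ ≥ 0, and γ ≥ 0. On ℝ^m let |·| denote the Euclidean norm and |p|_α = (Σ_{i=1}^m λ_i^{2α} p_i²)^{1/2} the weighted α-norm, and let A : ℝ^m → ℝ^m be the diagonal linear map (Ap)_i = λ_i p_i. Let B₁, B₂ : ℝ → L(ℝ^m, ℝ^m) be continuous with |B_j(t)w| ≤ 2 L_F |w|_α (j = 1, 2) and |(B₁(t) − B₂(t))w| ≤ δ e^{−γ t} |w|_α for all t ≤ 0 and w ∈ ℝ^m. Let Θ₁, Θ₂ : ℝ → L(ℝ^m, ℝ^m) be differentiable with Θ_j(0) = Id and Θ_j'(t) = −A ∘ Θ_j(t) + B_j(t) ∘ Θ_j(t) for all t ≤ 0. Then for every t ≤ 0 and z ∈ ℝ^m, |(Θ₁(t) − Θ₂(t)) z|_α ≤ (δ λ_m^α / (γ + 2 L_F λ_m^α)) · e^{−(γ + λ_m + 4 L_F λ_m^α) t} · |z|_α. -/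

import Mathlib

/-!
In the weighted norm `|w|_α = ‖D w‖`, `D = diag(λ_i^α)`, the map `A` is bounded by `λ_m` and
each `B_j(t)` by `2 L_F λ_m^α`. After reversing time, Gronwall's inequality bounds the second flow
by `e^{μs} |z|_α` with `μ = λ_m + 2 L_F λ_m^α`, so the difference `f` of the flows satisfies
`|f'| ≤ μ |f| + δ λ_m^α e^{(γ+μ)s} |z|_α` and `f 0 = 0`. It is therefore fenced by the solution
`C (e^{(μ+ρ)s} - e^{μs})`, `ρ = γ + 2 L_F λ_m^α`, of the comparison equation
`y' = μ y + C ρ e^{(μ+ρ)s}`, whose forcing dominates as soon as `C ρ ≥ δ λ_m^α |z|_α`.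
-/

open Real Set Filter Topology

section DiagonalScaling

open Matrix
open scoped Matrix.Norms.L2Operator

variable {ι : Type*} [Fintype ι] [DecidableEq ι]

lemma norm_toEuclideanCLM_diagonal_apply (c : ι → ℝ) (w : EuclideanSpace ℝ ι) :
    ‖toEuclideanCLM (𝕜 := ℝ) (diagonal c) w‖ = √(∑ i, c i ^ 2 * w i ^ 2) := by
  simp [EuclideanSpace.norm_eq, mulVec_diagonal, mul_pow]

lemma norm_toEuclideanCLM_diagonal_apply_le {c : ι → ℝ} {r : ℝ} (hr : 0 ≤ r)
    (hc : ∀ i, |c i| ≤ r) (w : EuclideanSpace ℝ ι) :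
    ‖toEuclideanCLM (𝕜 := ℝ) (diagonal c) w‖ ≤ r * ‖w‖ := by
  refine ((toEuclideanCLM (𝕜 := ℝ) (diagonal c)).le_opNorm w).trans ?_
  rw [l2_opNorm_toEuclideanCLM, l2_opNorm_diagonal]
  gcongr
  exact (pi_norm_le_iff_of_nonneg hr).2 hc

lemma sqrt_sum_rpow_mul_sq_eq_norm_toEuclideanCLM_diagonal {lam : ι → ℝ} (hlam : ∀ i, 0 ≤ lam i)
    (α : ℝ) (w : EuclideanSpace ℝ ι) :
    √(∑ i, lam i ^ (2 * α) * w i ^ 2) = ‖toEuclideanCLM (𝕜 := ℝ) (diagonal (lam · ^ α)) w‖ := by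
  simp only [norm_toEuclideanCLM_diagonal_apply, ← rpow_natCast, ← rpow_mul (hlam _)]
  ring_nf

lemma norm_toEuclideanCLM_diagonal_rpow_apply_le {lam : ι → ℝ} {Λ α : ℝ} (hlam : ∀ i, 0 ≤ lam i)
    (hΛ : 0 ≤ Λ) (hlamΛ : ∀ i, lam i ≤ Λ) (hα : 0 ≤ α) (w : EuclideanSpace ℝ ι) :
    ‖toEuclideanCLM (𝕜 := ℝ) (diagonal (lam · ^ α)) w‖ ≤ Λ ^ α * ‖w‖ :=
  norm_toEuclideanCLM_diagonal_apply_le (rpow_nonneg hΛ α) (fun i => by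
    rw [abs_of_nonneg (rpow_nonneg (hlam i) α)]
    exact rpow_le_rpow (hlam i) (hlamΛ i) hα) w

lemma norm_toEuclideanCLM_diagonal_map_le (c : ι → ℝ) {lam : ι → ℝ} {Λ : ℝ} (hΛ : 0 ≤ Λ)
    (hlamΛ : ∀ i, |lam i| ≤ Λ) {A : EuclideanSpace ℝ ι →L[ℝ] EuclideanSpace ℝ ι}
    (hA : ∀ p i, A p i = lam i * p i) (w : EuclideanSpace ℝ ι) :
    ‖toEuclideanCLM (𝕜 := ℝ) (diagonal c) (A w)‖ ≤
      Λ * ‖toEuclideanCLM (𝕜 := ℝ) (diagonal c) w‖ := by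
  have hcomm : toEuclideanCLM (𝕜 := ℝ) (diagonal c) (A w) =
      toEuclideanCLM (𝕜 := ℝ) (diagonal lam) (toEuclideanCLM (𝕜 := ℝ) (diagonal c) w) := by
    ext i
    simp only [ofLp_toEuclideanCLM, mulVec_diagonal, hA]
    ring
  rw [hcomm]
  exact norm_toEuclideanCLM_diagonal_apply_le hΛ hlamΛ _

end DiagonalScaling

section Comparison

variable {F : Type*} [NormedAddCommGroup F] [NormedSpace ℝ F]

lemma norm_le_mul_exp_sub_exp_of_norm_deriv_le {f f' : ℝ → F} {μ ρ ν K C : ℝ} (hν : ν ≤ μ + ρ)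
    (hK : 0 ≤ K) (hKC : K < C * ρ) (hf : ∀ s, 0 ≤ s → HasDerivAt f (f' s) s) (h0 : f 0 = 0)
    (bound : ∀ s, 0 ≤ s → ‖f' s‖ ≤ μ * ‖f s‖ + K * exp (ν * s)) :
    ∀ s, 0 ≤ s → ‖f s‖ ≤ C * (exp ((μ + ρ) * s) - exp (μ * s)) := by
  intro T hT
  have hB : ∀ s, HasDerivAt (fun s => C * (exp ((μ + ρ) * s) - exp (μ * s)))
      (C * ((μ + ρ) * exp ((μ + ρ) * s) - μ * exp (μ * s))) s := fun s => by
    refine ((((hasDerivAt_id' s).const_mul (μ + ρ)).exp.sub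
      ((hasDerivAt_id' s).const_mul μ).exp).const_mul C).congr_deriv ?_
    ring
  refine image_norm_le_of_norm_deriv_right_lt_deriv_boundary
    (fun s hs => (hf s hs.1).continuousAt.continuousWithinAt)
    (fun s hs => (hf s hs.1).hasDerivWithinAt) (by simp [h0]) hB ?_ ⟨hT, le_rfl⟩
  intro s hs hfs
  have hforcing : K * exp (ν * s) < C * ρ * exp ((μ + ρ) * s) :=
    calc K * exp (ν * s) ≤ K * exp ((μ + ρ) * s) := by gcongr; exact hs.1
      _ < C * ρ * exp ((μ + ρ) * s) := by gcongr
  calc ‖f' s‖ ≤ μ * ‖f s‖ + K * exp (ν * s) := bound s hs.1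
    _ < μ * ‖f s‖ + C * ρ * exp ((μ + ρ) * s) := by gcongr
    _ = C * ((μ + ρ) * exp ((μ + ρ) * s) - μ * exp (μ * s)) := by rw [hfs]; ring

lemma norm_le_div_mul_exp_sub_exp_of_norm_deriv_le {f f' : ℝ → F} {μ ρ ν K : ℝ} (hρ : 0 < ρ)
    (hν : ν ≤ μ + ρ) (hK : 0 ≤ K) (hf : ∀ s, 0 ≤ s → HasDerivAt f (f' s) s) (h0 : f 0 = 0)
    (bound : ∀ s, 0 ≤ s → ‖f' s‖ ≤ μ * ‖f s‖ + K * exp (ν * s)) :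
    ∀ s, 0 ≤ s → ‖f s‖ ≤ K / ρ * (exp ((μ + ρ) * s) - exp (μ * s)) := by
  intro s hs
  have hlim : Tendsto (fun C => C * (exp ((μ + ρ) * s) - exp (μ * s))) (𝓝[>] (K / ρ))
      (𝓝 (K / ρ * (exp ((μ + ρ) * s) - exp (μ * s)))) :=
    ((continuous_mul_const _).tendsto _).mono_left nhdsWithin_le_nhds
  refine ge_of_tendsto hlim (eventually_nhdsWithin_of_forall fun C hC => ?_)
  exact norm_le_mul_exp_sub_exp_of_norm_deriv_le hν hK ((div_lt_iff₀ hρ).1 hC) hf h0 bound s hs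

end Comparison

section Backward

variable {E F : Type*} [NormedAddCommGroup E] [NormedSpace ℝ E]
  [NormedAddCommGroup F] [NormedSpace ℝ F]

lemma hasDerivAt_apply_of_linear_flow {A B : E →L[ℝ] E} {Θ : ℝ → E →L[ℝ] E} {t : ℝ}
    (h : HasDerivAt Θ (-(A.comp (Θ t)) + B.comp (Θ t)) t) (z : E) :
    HasDerivAt (fun t => Θ t z) (-A (Θ t z) + B (Θ t z)) t := by
  simpa using h.clm_apply (hasDerivAt_const t z)

lemma hasDerivAt_map_comp_neg (D : E →L[ℝ] F) {u : ℝ → E} {u' : E} {s : ℝ}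
    (h : HasDerivAt u u' (-s)) : HasDerivAt (fun s => D (u (-s))) (-D u') s := by
  simpa [Function.comp_def] using
    HasDerivAt.scomp s (D.hasFDerivAt.comp_hasDerivAt (-s) h) (hasDerivAt_neg s)

lemma norm_map_neg_add_le {D : E →L[ℝ] F} {A B : E →L[ℝ] E} {a b : ℝ}
    (hA : ∀ w, ‖D (A w)‖ ≤ a * ‖D w‖) (hB : ∀ w, ‖D (B w)‖ ≤ b * ‖D w‖) (w : E) :
    ‖D (-A w + B w)‖ ≤ (a + b) * ‖D w‖ :=
  calc ‖D (-A w + B w)‖ ≤ ‖D (A w)‖ + ‖D (B w)‖ := by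
        simpa only [map_add, map_neg, norm_neg] using norm_add_le (-D (A w)) (D (B w))
    _ ≤ (a + b) * ‖D w‖ := by linarith [hA w, hB w]

lemma norm_map_comp_neg_le_exp_of_norm_map_deriv_le {D : E →L[ℝ] F} {u V : ℝ → E} {μ : ℝ}
    (hu : ∀ t ≤ 0, HasDerivAt u (V t) t) (hV : ∀ t ≤ 0, ‖D (V t)‖ ≤ μ * ‖D (u t)‖) :
    ∀ s, 0 ≤ s → ‖D (u (-s))‖ ≤ ‖D (u 0)‖ * exp (μ * s) := by
  intro s hs
  have hg : ∀ r, 0 ≤ r → HasDerivAt (fun r => D (u (-r))) (-D (V (-r))) r :=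
    fun r hr => hasDerivAt_map_comp_neg D (hu (-r) (by linarith))
  have := norm_le_gronwallBound_of_norm_deriv_right_le (δ := ‖D (u 0)‖) (ε := 0)
    (fun r hr => (hg r hr.1).continuousAt.continuousWithinAt)
    (fun r hr => (hg r hr.1).hasDerivWithinAt) (by simp)
    (fun r hr => by simpa using hV (-r) (by linarith [hr.1])) s ⟨hs, le_rfl⟩
  simpa [gronwallBound_ε0] using this

theorem norm_map_sub_le_of_backward_flows {D : E →L[ℝ] F} {A : E →L[ℝ] E}
    {B₁ B₂ : ℝ → E →L[ℝ] E} {u₁ u₂ : ℝ → E} {z : E} {a b k γ : ℝ}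
    (hb : 0 ≤ b) (hγb : 0 < γ + b) (hk : 0 ≤ k)
    (hA : ∀ w, ‖D (A w)‖ ≤ a * ‖D w‖)
    (hB₁ : ∀ t ≤ 0, ∀ w, ‖D (B₁ t w)‖ ≤ b * ‖D w‖)
    (hB₂ : ∀ t ≤ 0, ∀ w, ‖D (B₂ t w)‖ ≤ b * ‖D w‖)
    (hB : ∀ t ≤ 0, ∀ w, ‖D ((B₁ t - B₂ t) w)‖ ≤ k * exp (-(γ * t)) * ‖D w‖)
    (hu₁ : ∀ t ≤ 0, HasDerivAt u₁ (-A (u₁ t) + B₁ t (u₁ t)) t)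
    (hu₂ : ∀ t ≤ 0, HasDerivAt u₂ (-A (u₂ t) + B₂ t (u₂ t)) t)
    (hu₁0 : u₁ 0 = z) (hu₂0 : u₂ 0 = z) :
    ∀ t ≤ 0, ‖D (u₁ t - u₂ t)‖ ≤ k / (γ + b) * exp (-((γ + a + 2 * b) * t)) * ‖D z‖ := by
  have hu₂_le : ∀ s, 0 ≤ s → ‖D (u₂ (-s))‖ ≤ ‖D z‖ * exp ((a + b) * s) := by
    simpa only [hu₂0] using norm_map_comp_neg_le_exp_of_norm_map_deriv_le hu₂
      fun t ht => norm_map_neg_add_le hA (hB₂ t ht) (u₂ t)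
  have hf : ∀ s, 0 ≤ s → HasDerivAt (fun s => D (u₁ (-s) - u₂ (-s)))
      (-D ((-A (u₁ (-s)) + B₁ (-s) (u₁ (-s))) - (-A (u₂ (-s)) + B₂ (-s) (u₂ (-s))))) s :=
    fun s hs => hasDerivAt_map_comp_neg D ((hu₁ (-s) (by linarith)).sub (hu₂ (-s) (by linarith)))
  have hbound : ∀ s, 0 ≤ s →
      ‖-D ((-A (u₁ (-s)) + B₁ (-s) (u₁ (-s))) - (-A (u₂ (-s)) + B₂ (-s) (u₂ (-s))))‖ ≤
        (a + b) * ‖D (u₁ (-s) - u₂ (-s))‖ + k * ‖D z‖ * exp ((γ + (a + b)) * s) := by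
    intro s hs
    have hsplit : (-A (u₁ (-s)) + B₁ (-s) (u₁ (-s))) - (-A (u₂ (-s)) + B₂ (-s) (u₂ (-s))) =
        (-A (u₁ (-s) - u₂ (-s)) + B₁ (-s) (u₁ (-s) - u₂ (-s))) + (B₁ (-s) - B₂ (-s)) (u₂ (-s)) := by
      simp only [map_sub, sub_apply]
      abel
    rw [norm_neg, hsplit, map_add]
    refine (norm_add_le _ _).trans (add_le_add
      (norm_map_neg_add_le hA (hB₁ (-s) (by linarith)) _) ?_)
    calc ‖D ((B₁ (-s) - B₂ (-s)) (u₂ (-s)))‖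
        ≤ k * exp (γ * s) * ‖D (u₂ (-s))‖ := by simpa using hB (-s) (by linarith) (u₂ (-s))
      _ ≤ k * exp (γ * s) * (‖D z‖ * exp ((a + b) * s)) := by gcongr; exact hu₂_le s hs
      _ = k * ‖D z‖ * exp ((γ + (a + b)) * s) := by
          rw [show (γ + (a + b)) * s = γ * s + (a + b) * s by ring, exp_add]; ring
  intro t ht
  have key := norm_le_div_mul_exp_sub_exp_of_norm_deriv_le hγb (by linarith) (by positivity) hf
    (by simp [hu₁0, hu₂0]) hbound (-t) (by linarith)
  calc ‖D (u₁ t - u₂ t)‖ ≤ k * ‖D z‖ / (γ + b) *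
        (exp ((a + b + (γ + b)) * -t) - exp ((a + b) * -t)) := by simpa using key
    _ ≤ k * ‖D z‖ / (γ + b) * exp ((a + b + (γ + b)) * -t) := by
        gcongr; linarith [exp_pos ((a + b) * -t)]
    _ = k / (γ + b) * exp (-((γ + a + 2 * b) * t)) * ‖D z‖ := by ring_nf

end Backward

/-- Comparison of two linearized backward flows `Θ_j' = −A∘Θ_j + B_j(t)∘Θ_j`, `Θ_j(0) = Id`:
if `|B_j(t)w| ≤ 2 L_F |w|_α` and `|(B₁(t) − B₂(t))w| ≤ δ e^{−γt} |w|_α` for `t ≤ 0`, then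
`|(Θ₁(t) − Θ₂(t)) z|_α ≤ (δ λ_m^α / (γ + 2 L_F λ_m^α)) e^{−(γ + λ_m + 4 L_F λ_m^α) t} |z|_α`
for `t ≤ 0`, where `|w|_α = (Σ λ_i^{2α} w_i²)^{1/2}`. -/
theorem linearized_flows_backward_comparison
    (m : ℕ) (hm : 0 < m) (α : ℝ) (hα0 : 0 ≤ α)
    (lam : Fin m → ℝ) (hpos : ∀ i, 0 < lam i) (hmono : Monotone lam)
    (LF δ γ : ℝ) (hLF : 0 < LF) (hδ : 0 ≤ δ) (hγ : 0 ≤ γ)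
    (A : EuclideanSpace ℝ (Fin m) →L[ℝ] EuclideanSpace ℝ (Fin m))
    (hA : ∀ (p : EuclideanSpace ℝ (Fin m)) (i : Fin m), A p i = lam i * p i)
    (B₁ B₂ : ℝ → (EuclideanSpace ℝ (Fin m) →L[ℝ] EuclideanSpace ℝ (Fin m)))
    (hB₁ : ∀ t ≤ (0 : ℝ), ∀ w : EuclideanSpace ℝ (Fin m),
      ‖B₁ t w‖ ≤ 2 * LF * Real.sqrt (∑ i, lam i ^ (2 * α) * (w i) ^ 2))
    (hB₂ : ∀ t ≤ (0 : ℝ), ∀ w : EuclideanSpace ℝ (Fin m),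
      ‖B₂ t w‖ ≤ 2 * LF * Real.sqrt (∑ i, lam i ^ (2 * α) * (w i) ^ 2))
    (hBdiff : ∀ t ≤ (0 : ℝ), ∀ w : EuclideanSpace ℝ (Fin m),
      ‖(B₁ t - B₂ t) w‖ ≤ δ * Real.exp (-(γ * t)) *
        Real.sqrt (∑ i, lam i ^ (2 * α) * (w i) ^ 2))
    (Θ₁ Θ₂ : ℝ → (EuclideanSpace ℝ (Fin m) →L[ℝ] EuclideanSpace ℝ (Fin m)))
    (hΘ₁0 : Θ₁ 0 = ContinuousLinearMap.id ℝ (EuclideanSpace ℝ (Fin m)))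
    (hΘ₂0 : Θ₂ 0 = ContinuousLinearMap.id ℝ (EuclideanSpace ℝ (Fin m)))
    (hΘ₁ : ∀ t ≤ (0 : ℝ), HasDerivAt Θ₁ (-(A.comp (Θ₁ t)) + (B₁ t).comp (Θ₁ t)) t)
    (hΘ₂ : ∀ t ≤ (0 : ℝ), HasDerivAt Θ₂ (-(A.comp (Θ₂ t)) + (B₂ t).comp (Θ₂ t)) t) :
    ∀ t ≤ (0 : ℝ), ∀ z : EuclideanSpace ℝ (Fin m),
      Real.sqrt (∑ i, lam i ^ (2 * α) * ((Θ₁ t - Θ₂ t) z i) ^ 2)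
        ≤ (δ * lam ⟨m - 1, by omega⟩ ^ α / (γ + 2 * LF * lam ⟨m - 1, by omega⟩ ^ α)) *
          Real.exp (-((γ + lam ⟨m - 1, by omega⟩ + 4 * LF * lam ⟨m - 1, by omega⟩ ^ α) * t)) *
          Real.sqrt (∑ i, lam i ^ (2 * α) * (z i) ^ 2) := by
  intro t ht z
  set M : Fin m := ⟨m - 1, by omega⟩
  have hle (i : Fin m) : lam i ≤ lam M := hmono (Fin.le_iff_val_le_val.2 (by simp [M]; omega))
  have hlam (i : Fin m) : 0 ≤ lam i := (hpos i).le
  have hMα : 0 < lam M ^ α := rpow_pos_of_pos (hpos M) α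
  set D := Matrix.toEuclideanCLM (𝕜 := ℝ) (Matrix.diagonal (lam · ^ α))
  have hnormα := sqrt_sum_rpow_mul_sq_eq_norm_toEuclideanCLM_diagonal hlam α
  have hDB {c : ℝ} (v w : EuclideanSpace ℝ (Fin m))
      (h : ‖v‖ ≤ c * √(∑ i, lam i ^ (2 * α) * w i ^ 2)) : ‖D v‖ ≤ c * lam M ^ α * ‖D w‖ := by
    rw [hnormα] at h
    calc ‖D v‖ ≤ lam M ^ α * ‖v‖ :=
          norm_toEuclideanCLM_diagonal_rpow_apply_le hlam (hlam M) hle hα0 v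
      _ ≤ lam M ^ α * (c * ‖D w‖) := by gcongr
      _ = c * lam M ^ α * ‖D w‖ := by ring
  have key := norm_map_sub_le_of_backward_flows (D := D) (z := z) (a := lam M)
    (b := 2 * LF * lam M ^ α) (k := δ * lam M ^ α) (γ := γ) (by positivity) (by positivity)
    (by positivity) (norm_toEuclideanCLM_diagonal_map_le _ (hlam M)
      (fun i => (abs_of_pos (hpos i)).trans_le (hle i)) hA)
    (fun t ht w => hDB _ _ (hB₁ t ht w)) (fun t ht w => hDB _ _ (hB₂ t ht w))
    (fun t ht w => (hDB _ _ (hBdiff t ht w)).trans_eq (by ring))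
    (fun t ht => hasDerivAt_apply_of_linear_flow (hΘ₁ t ht) z)
    (fun t ht => hasDerivAt_apply_of_linear_flow (hΘ₂ t ht) z)
    (by simp [hΘ₁0]) (by simp [hΘ₂0]) t ht
  rw [hnormα, hnormα, sub_apply,
    show 4 * LF * lam M ^ α = 2 * (2 * LF * lam M ^ α) by ring]
  exact key
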